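/- Soundness and completeness of core-wMSO(?,+): for every finite set Γ of MSO formulas and all core-wMSO(?,+) formulas Φ₁, Φ₂, Φ₁ ∼_Γ Φ₂ if and only if Γ ⊢ Φ₁ ≈ Φ₂ is derivable. -/

import Mathlib

namespace WMSO

/-- MSO formulas over alphabet `A`; first- and second-order variables are `ℕ`. -/
inductive MSO (A : Type) : Type
  | top : MSO A
  | pred : A → ℕ → MSO A
  | le : ℕ → ℕ → MSO A
  | mem : ℕ → ℕ → MSO A
  | not : MSO A → MSO A
  | and : MSO A → MSO A → MSO A
  | allFO : ℕ → MSO A → MSO A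
  | allSO : ℕ → MSO A → MSO A

/-- A nonempty word over `A` together with a valuation of first-order variables
(positions of the word) and second-order variables (sets of positions):
an element of `Σ⁺_val`. -/
structure WVal (A : Type) : Type where
  word : List A
  nonempty : word ≠ []
  fo : ℕ → Fin word.length
  so : ℕ → Finset (Fin word.length)

variable {A R : Type}

def WVal.updFO (m : WVal A) (x : ℕ) (i : Fin m.word.length) : WVal A :=
  { m with fo := Function.update m.fo x i }

def WVal.updSO (m : WVal A) (X : ℕ) (I : Finset (Fin m.word.length)) : WVal A :=
  { m with so := Function.update m.so X I }

/-- Standard MSO satisfaction over pairs `(w,σ)`. -/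
def MSO.Sat : MSO A → WVal A → Prop
  | .top, _ => True
  | .pred a x, m => m.word.get (m.fo x) = a
  | .le x y, m => (m.fo x : ℕ) ≤ (m.fo y : ℕ)
  | .mem x X, m => m.fo x ∈ m.so X
  | .not φ, m => ¬ φ.Sat m
  | .and φ ψ, m => φ.Sat m ∧ ψ.Sat m
  | .allFO x φ, m => ∀ i, φ.Sat (m.updFO x i)
  | .allSO X φ, m => ∀ I, φ.Sat (m.updSO X I)

/-- `(w,σ)` satisfies every formula in `Γ`. -/
def SatAll (Γ : Set (MSO A)) (m : WVal A) : Prop := ∀ φ ∈ Γ, φ.Sat m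

/-- Semantic entailment for MSO (which, by completeness of MSO over finite
words, coincides with derivability). -/
def Entails (Γ : Set (MSO A)) (φ : MSO A) : Prop := ∀ m : WVal A, SatAll Γ m → φ.Sat m

/-- Disjunction as a derived MSO connective. -/
def MSO.or (φ ψ : MSO A) : MSO A := .not (.and (.not φ) (.not ψ))

/-- `⋁` over a list of MSO formulas; the empty disjunction is `¬⊤`. -/
def bigOr : List (MSO A) → MSO A
  | [] => .not .top
  | φ :: l => φ.or (bigOr l)

/-! ### Variable occurrences and renaming -/

/-- First-order variable `x` occurs free in an MSO formula. -/
def MSO.FreeFO (x : ℕ) : MSO A → Prop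
  | .top => False
  | .pred _ z => z = x
  | .le z w => z = x ∨ w = x
  | .mem z _ => z = x
  | .not φ => φ.FreeFO x
  | .and φ ψ => φ.FreeFO x ∨ ψ.FreeFO x
  | .allFO z φ => z ≠ x ∧ φ.FreeFO x
  | .allSO _ φ => φ.FreeFO x

/-- Second-order variable `X` occurs free in an MSO formula. -/
def MSO.FreeSO (X : ℕ) : MSO A → Prop
  | .top => False
  | .pred _ _ => False
  | .le _ _ => False
  | .mem _ Z => Z = X
  | .not φ => φ.FreeSO X
  | .and φ ψ => φ.FreeSO X ∨ ψ.FreeSO X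
  | .allFO _ φ => φ.FreeSO X
  | .allSO Z φ => Z ≠ X ∧ φ.FreeSO X

/-- First-order variable `y` occurs (anywhere) in an MSO formula. -/
def MSO.OccFO (y : ℕ) : MSO A → Prop
  | .top => False
  | .pred _ z => z = y
  | .le z w => z = y ∨ w = y
  | .mem z _ => z = y
  | .not φ => φ.OccFO y
  | .and φ ψ => φ.OccFO y ∨ ψ.OccFO y
  | .allFO z φ => z = y ∨ φ.OccFO y
  | .allSO _ φ => φ.OccFO y

/-- Second-order variable `Y` occurs (anywhere) in an MSO formula. -/
def MSO.OccSO (Y : ℕ) : MSO A → Prop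
  | .top => False
  | .pred _ _ => False
  | .le _ _ => False
  | .mem _ Z => Z = Y
  | .not φ => φ.OccSO Y
  | .and φ ψ => φ.OccSO Y ∨ ψ.OccSO Y
  | .allFO _ φ => φ.OccSO Y
  | .allSO Z φ => Z = Y ∨ φ.OccSO Y

/-- Replace the variable `x` by `y`. -/
def rn (x y z : ℕ) : ℕ := if z = x then y else z

/-- Replace the first-order variable `x` by `y` everywhere in an MSO formula. -/
def MSO.renFO (x y : ℕ) : MSO A → MSO A
  | .top => .top
  | .pred a z => .pred a (rn x y z)
  | .le z w => .le (rn x y z) (rn x y w)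
  | .mem z X => .mem (rn x y z) X
  | .not φ => .not (φ.renFO x y)
  | .and φ ψ => .and (φ.renFO x y) (ψ.renFO x y)
  | .allFO z φ => .allFO (rn x y z) (φ.renFO x y)
  | .allSO X φ => .allSO X (φ.renFO x y)

/-- Replace the second-order variable `X` by `Y` everywhere in an MSO formula. -/
def MSO.renSO (X Y : ℕ) : MSO A → MSO A
  | .top => .top
  | .pred a z => .pred a z
  | .le z w => .le z w
  | .mem z Z => .mem z (rn X Y Z)
  | .not φ => .not (φ.renSO X Y)
  | .and φ ψ => .and (φ.renSO X Y) (ψ.renSO X Y)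
  | .allFO z φ => .allFO z (φ.renSO X Y)
  | .allSO Z φ => .allSO (rn X Y Z) (φ.renSO X Y)

/-! ### step-wMSO -/

/-- step-wMSO formulas: `Ψ ::= r | φ ? Ψ₁ : Ψ₂`. -/
inductive Step (A R : Type) : Type
  | const : R → Step A R
  | ite : MSO A → Step A R → Step A R → Step A R

open Classical in
/-- Semantics of step-wMSO. -/
noncomputable def Step.sem : Step A R → WVal A → R
  | .const r, _ => r
  | .ite φ Ψ₁ Ψ₂, m => if φ.Sat m then Ψ₁.sem m else Ψ₂.sem m

/-- `Ψ₁ ∼_Γ Ψ₂` for step-wMSO. -/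
def StepEquiv (Γ : Set (MSO A)) (Ψ₁ Ψ₂ : Step A R) : Prop :=
  ∀ m : WVal A, SatAll Γ m → Ψ₁.sem m = Ψ₂.sem m

/-- `y` occurs in a step-wMSO formula (as a first-order variable). -/
def Step.OccFO (y : ℕ) : Step A R → Prop
  | .const _ => False
  | .ite φ Ψ₁ Ψ₂ => φ.OccFO y ∨ Ψ₁.OccFO y ∨ Ψ₂.OccFO y

/-- `Y` occurs in a step-wMSO formula (as a second-order variable). -/
def Step.OccSO (Y : ℕ) : Step A R → Prop
  | .const _ => False
  | .ite φ Ψ₁ Ψ₂ => φ.OccSO Y ∨ Ψ₁.OccSO Y ∨ Ψ₂.OccSO Y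

/-- Replace the first-order variable `x` by `y` in a step-wMSO formula. -/
def Step.renFO (x y : ℕ) : Step A R → Step A R
  | .const r => .const r
  | .ite φ Ψ₁ Ψ₂ => .ite (φ.renFO x y) (Ψ₁.renFO x y) (Ψ₂.renFO x y)

/-- Replace the second-order variable `X` by `Y` in a step-wMSO formula. -/
def Step.renSO (X Y : ℕ) : Step A R → Step A R
  | .const r => .const r
  | .ite φ Ψ₁ Ψ₂ => .ite (φ.renSO X Y) (Ψ₁.renSO X Y) (Ψ₂.renSO X Y)

/-- The set `R(Ψ)` of weights occurring in a step-wMSO formula. -/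
def Step.weights [DecidableEq R] : Step A R → Finset R
  | .const r => {r}
  | .ite _ Ψ₁ Ψ₂ => Ψ₁.weights ∪ Ψ₂.weights

/-- The MSO formula `φ(Ψ,r)` characterizing `⟦Ψ⟧ = r`. -/
def phiOf [DecidableEq R] : Step A R → R → MSO A
  | .const r', r => if r' = r then .top else .not .top
  | .ite φ' Ψ₁ Ψ₂, r => (MSO.and φ' (phiOf Ψ₁ r)).or (MSO.and (.not φ') (phiOf Ψ₂ r))

/-- The equational proof system for step-wMSO: equational logic
(refl, symm, trans, congruence for the conditional) plus axioms (S1)–(S4),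
where the MSO side condition of (S3) is semantic entailment. -/
inductive StepDeriv : Set (MSO A) → Step A R → Step A R → Prop
  | refl (Γ : Set (MSO A)) (Ψ : Step A R) : StepDeriv Γ Ψ Ψ
  | symm {Γ Ψ₁ Ψ₂} : StepDeriv Γ Ψ₁ Ψ₂ → StepDeriv Γ Ψ₂ Ψ₁
  | trans {Γ Ψ₁ Ψ₂ Ψ₃} : StepDeriv Γ Ψ₁ Ψ₂ → StepDeriv Γ Ψ₂ Ψ₃ → StepDeriv Γ Ψ₁ Ψ₃
  | congIte {Γ Ψ₁ Ψ₁' Ψ₂ Ψ₂'} (φ : MSO A) :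
      StepDeriv Γ Ψ₁ Ψ₁' → StepDeriv Γ Ψ₂ Ψ₂' →
      StepDeriv Γ (.ite φ Ψ₁ Ψ₂) (.ite φ Ψ₁' Ψ₂')
  | s1 {Γ Ψ₁ Ψ₂} (φ : MSO A) : StepDeriv Γ Ψ₁ Ψ₂ → StepDeriv (insert φ Γ) Ψ₁ Ψ₂
  | s2 (Γ : Set (MSO A)) (φ : MSO A) (Ψ₁ Ψ₂ : Step A R) :
      StepDeriv Γ (.ite (.not φ) Ψ₁ Ψ₂) (.ite φ Ψ₂ Ψ₁)
  | s3 {Γ : Set (MSO A)} {φ : MSO A} (Ψ₁ Ψ₂ : Step A R) :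
      Entails Γ φ → StepDeriv Γ (.ite φ Ψ₁ Ψ₂) Ψ₁
  | s4 {Γ : Set (MSO A)} {φ : MSO A} {Ψ₁ Ψ₂ Ψ : Step A R} :
      StepDeriv (insert φ Γ) Ψ₁ Ψ → StepDeriv (insert (.not φ) Γ) Ψ₂ Ψ →
      StepDeriv Γ (.ite φ Ψ₁ Ψ₂) Ψ

/-! ### core-wMSO -/

/-- core-wMSO formulas. -/
inductive Core (A R : Type) : Type
  | zero : Core A R
  | prod : ℕ → Step A R → Core A R
  | ite : MSO A → Core A R → Core A R → Core A R
  | add : Core A R → Core A R → Core A R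
  | sumFO : ℕ → Core A R → Core A R
  | sumSO : ℕ → Core A R → Core A R

open Classical in
/-- Abstract semantics of core-wMSO, valued in finite multisets of words over `R`. -/
noncomputable def Core.sem : Core A R → WVal A → Multiset (List R)
  | .zero, _ => 0
  | .prod x Ψ, m => {List.ofFn (fun i : Fin m.word.length => Ψ.sem (m.updFO x i))}
  | .ite φ Φ₁ Φ₂, m => if φ.Sat m then Φ₁.sem m else Φ₂.sem m
  | .add Φ₁ Φ₂, m => Φ₁.sem m + Φ₂.sem m
  | .sumFO x Φ, m => ∑ i : Fin m.word.length, Φ.sem (m.updFO x i)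
  | .sumSO X Φ, m => ∑ I : Finset (Fin m.word.length), Φ.sem (m.updSO X I)

/-- `Φ₁ ∼_Γ Φ₂` for core-wMSO. -/
def CoreEquiv (Γ : Set (MSO A)) (Φ₁ Φ₂ : Core A R) : Prop :=
  ∀ m : WVal A, SatAll Γ m → Φ₁.sem m = Φ₂.sem m

/-- The set of weights occurring in a core-wMSO formula. -/
def Core.weights [DecidableEq R] : Core A R → Finset R
  | .zero => ∅
  | .prod _ Ψ => Ψ.weights
  | .ite _ Φ₁ Φ₂ => Φ₁.weights ∪ Φ₂.weights
  | .add Φ₁ Φ₂ => Φ₁.weights ∪ Φ₂.weights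
  | .sumFO _ Φ => Φ.weights
  | .sumSO _ Φ => Φ.weights

/-- `y` occurs in a core-wMSO formula as a first-order variable. -/
def Core.OccFO (y : ℕ) : Core A R → Prop
  | .zero => False
  | .prod z Ψ => z = y ∨ Ψ.OccFO y
  | .ite φ Φ₁ Φ₂ => φ.OccFO y ∨ Φ₁.OccFO y ∨ Φ₂.OccFO y
  | .add Φ₁ Φ₂ => Φ₁.OccFO y ∨ Φ₂.OccFO y
  | .sumFO z Φ => z = y ∨ Φ.OccFO y
  | .sumSO _ Φ => Φ.OccFO y

/-- `Y` occurs in a core-wMSO formula as a second-order variable. -/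
def Core.OccSO (Y : ℕ) : Core A R → Prop
  | .zero => False
  | .prod _ Ψ => Ψ.OccSO Y
  | .ite φ Φ₁ Φ₂ => φ.OccSO Y ∨ Φ₁.OccSO Y ∨ Φ₂.OccSO Y
  | .add Φ₁ Φ₂ => Φ₁.OccSO Y ∨ Φ₂.OccSO Y
  | .sumFO _ Φ => Φ.OccSO Y
  | .sumSO Z Φ => Z = Y ∨ Φ.OccSO Y

/-- Replace the first-order variable `x` by `y` in a core-wMSO formula. -/
def Core.renFO (x y : ℕ) : Core A R → Core A R
  | .zero => .zero
  | .prod z Ψ => .prod (rn x y z) (Ψ.renFO x y)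
  | .ite φ Φ₁ Φ₂ => .ite (φ.renFO x y) (Φ₁.renFO x y) (Φ₂.renFO x y)
  | .add Φ₁ Φ₂ => .add (Φ₁.renFO x y) (Φ₂.renFO x y)
  | .sumFO z Φ => .sumFO (rn x y z) (Φ.renFO x y)
  | .sumSO Z Φ => .sumSO Z (Φ.renFO x y)

/-- Replace the second-order variable `X` by `Y` in a core-wMSO formula. -/
def Core.renSO (X Y : ℕ) : Core A R → Core A R
  | .zero => .zero
  | .prod z Ψ => .prod z (Ψ.renSO X Y)
  | .ite φ Φ₁ Φ₂ => .ite (φ.renSO X Y) (Φ₁.renSO X Y) (Φ₂.renSO X Y)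
  | .add Φ₁ Φ₂ => .add (Φ₁.renSO X Y) (Φ₂.renSO X Y)
  | .sumFO z Φ => .sumFO z (Φ.renSO X Y)
  | .sumSO Z Φ => .sumSO (rn X Y Z) (Φ.renSO X Y)

/-- core-wMSO formulas with no occurrence of the binary sum `+`
(second normal form). -/
def Core.noAdd : Core A R → Prop
  | .zero => True
  | .prod _ _ => True
  | .ite _ Φ₁ Φ₂ => Φ₁.noAdd ∧ Φ₂.noAdd
  | .add _ _ => False
  | .sumFO _ Φ => Φ.noAdd
  | .sumSO _ Φ => Φ.noAdd

/-! ### The fragment core-wMSO(?,+) -/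

/-- core-wMSO(?,+) formulas: `Φ ::= 𝟬 | ∏_x Ψ | φ ? Φ₁ : Φ₂ | Φ₁ + Φ₂`. -/
inductive CoreP (A R : Type) : Type
  | zero : CoreP A R
  | prod : ℕ → Step A R → CoreP A R
  | ite : MSO A → CoreP A R → CoreP A R → CoreP A R
  | add : CoreP A R → CoreP A R → CoreP A R

open Classical in
/-- Abstract semantics of core-wMSO(?,+). -/
noncomputable def CoreP.sem : CoreP A R → WVal A → Multiset (List R)
  | .zero, _ => 0
  | .prod x Ψ, m => {List.ofFn (fun i : Fin m.word.length => Ψ.sem (m.updFO x i))}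
  | .ite φ Φ₁ Φ₂, m => if φ.Sat m then Φ₁.sem m else Φ₂.sem m
  | .add Φ₁ Φ₂, m => Φ₁.sem m + Φ₂.sem m

/-- `Φ₁ ∼_Γ Φ₂` for core-wMSO(?,+). -/
def CorePEquiv (Γ : Set (MSO A)) (Φ₁ Φ₂ : CoreP A R) : Prop :=
  ∀ m : WVal A, SatAll Γ m → Φ₁.sem m = Φ₂.sem m

/-- `y` occurs in a core-wMSO(?,+) formula as a first-order variable. -/
def CoreP.OccFO (y : ℕ) : CoreP A R → Prop
  | .zero => False
  | .prod z Ψ => z = y ∨ Ψ.OccFO y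
  | .ite φ Φ₁ Φ₂ => φ.OccFO y ∨ Φ₁.OccFO y ∨ Φ₂.OccFO y
  | .add Φ₁ Φ₂ => Φ₁.OccFO y ∨ Φ₂.OccFO y

/-- The equational proof system for core-wMSO(?,+): equational logic
(refl, symm, trans, congruence for `?` and `+`) plus axioms (C1)–(C10),
where MSO side conditions are semantic entailment. -/
inductive CorePDeriv : Set (MSO A) → CoreP A R → CoreP A R → Prop
  | refl (Γ : Set (MSO A)) (Φ : CoreP A R) : CorePDeriv Γ Φ Φ
  | symm {Γ Φ₁ Φ₂} : CorePDeriv Γ Φ₁ Φ₂ → CorePDeriv Γ Φ₂ Φ₁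
  | trans {Γ Φ₁ Φ₂ Φ₃} : CorePDeriv Γ Φ₁ Φ₂ → CorePDeriv Γ Φ₂ Φ₃ → CorePDeriv Γ Φ₁ Φ₃
  | congIte {Γ Φ₁ Φ₁' Φ₂ Φ₂'} (φ : MSO A) :
      CorePDeriv Γ Φ₁ Φ₁' → CorePDeriv Γ Φ₂ Φ₂' →
      CorePDeriv Γ (.ite φ Φ₁ Φ₂) (.ite φ Φ₁' Φ₂')
  | congAdd {Γ Φ₁ Φ₁' Φ₂ Φ₂'} :
      CorePDeriv Γ Φ₁ Φ₁' → CorePDeriv Γ Φ₂ Φ₂' →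
      CorePDeriv Γ (.add Φ₁ Φ₂) (.add Φ₁' Φ₂')
  | c1 (Γ : Set (MSO A)) (Φ : CoreP A R) : CorePDeriv Γ (Φ.add .zero) Φ
  | c2 (Γ : Set (MSO A)) (Φ₁ Φ₂ : CoreP A R) : CorePDeriv Γ (Φ₁.add Φ₂) (Φ₂.add Φ₁)
  | c3 (Γ : Set (MSO A)) (Φ₁ Φ₂ Φ₃ : CoreP A R) :
      CorePDeriv Γ ((Φ₁.add Φ₂).add Φ₃) (Φ₁.add (Φ₂.add Φ₃))
  | c4 {Γ : Set (MSO A)} {Ψ₁ Ψ₂ : Step A R} (x : ℕ) :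
      (∀ ψ ∈ Γ, ¬ ψ.FreeFO x) → StepDeriv Γ Ψ₁ Ψ₂ →
      CorePDeriv Γ (.prod x Ψ₁) (.prod x Ψ₂)
  | c5 (Γ : Set (MSO A)) (x y : ℕ) (Ψ : Step A R) :
      ¬ Ψ.OccFO y → CorePDeriv Γ (.prod x Ψ) (.prod y (Ψ.renFO x y))
  | c6 {Γ Φ₁ Φ₂} (φ : MSO A) : CorePDeriv Γ Φ₁ Φ₂ → CorePDeriv (insert φ Γ) Φ₁ Φ₂
  | c7 (Γ : Set (MSO A)) (φ : MSO A) (Φ₁ Φ₂ : CoreP A R) :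
      CorePDeriv Γ (.ite (.not φ) Φ₁ Φ₂) (.ite φ Φ₂ Φ₁)
  | c8 {Γ : Set (MSO A)} {φ : MSO A} (Φ₁ Φ₂ : CoreP A R) :
      Entails Γ φ → CorePDeriv Γ (.ite φ Φ₁ Φ₂) Φ₁
  | c9 {Γ : Set (MSO A)} {φ : MSO A} {Φ₁ Φ₂ Φ : CoreP A R} :
      CorePDeriv (insert φ Γ) Φ₁ Φ → CorePDeriv (insert (.not φ) Γ) Φ₂ Φ →
      CorePDeriv Γ (.ite φ Φ₁ Φ₂) Φ
  | c10 (Γ : Set (MSO A)) (φ : MSO A) (Φ' Φ'' Φ : CoreP A R) :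
      CorePDeriv Γ ((CoreP.ite φ Φ' Φ'').add Φ) (.ite φ (Φ'.add Φ) (Φ''.add Φ))

/-- Normal-form `M`-layer: `M ::= ∏_x Ψ | M₁ + M₂`. -/
inductive IsM : CoreP A R → Prop
  | prod (x : ℕ) (Ψ : Step A R) : IsM (.prod x Ψ)
  | add {M₁ M₂ : CoreP A R} : IsM M₁ → IsM M₂ → IsM (M₁.add M₂)

/-- Normal form for core-wMSO(?,+): `N ::= φ ? N₁ : N₂ | M | 𝟬`. -/
inductive IsNF : CoreP A R → Prop
  | zero : IsNF .zero
  | ofM {M : CoreP A R} : IsM M → IsNF M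
  | ite {N₁ N₂ : CoreP A R} (φ : MSO A) : IsNF N₁ → IsNF N₂ → IsNF (.ite φ N₁ N₂)

/-- The finite sum `∑_{i=1}^k ∏_x Ψ_i` of products. -/
def sumProds (x : ℕ) (L : List (Step A R)) : CoreP A R :=
  (L.map (CoreP.prod x)).foldr CoreP.add CoreP.zero

/-! ### The full core-wMSO proof system -/

/-- `Σ_{X⃗}` for a sequence of second-order variables. -/
def bigSumSO (Xs : List ℕ) (Φ : Core A R) : Core A R := Xs.foldr Core.sumSO Φ

/-- The equational proof system for full core-wMSO: equational logic plus
axioms (C1)–(C16) together with the first-order analogues of (C11)–(C16);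
MSO side conditions are read semantically. -/
inductive CoreDeriv : Set (MSO A) → Core A R → Core A R → Prop
  | refl (Γ : Set (MSO A)) (Φ : Core A R) : CoreDeriv Γ Φ Φ
  | symm {Γ Φ₁ Φ₂} : CoreDeriv Γ Φ₁ Φ₂ → CoreDeriv Γ Φ₂ Φ₁
  | trans {Γ Φ₁ Φ₂ Φ₃} : CoreDeriv Γ Φ₁ Φ₂ → CoreDeriv Γ Φ₂ Φ₃ → CoreDeriv Γ Φ₁ Φ₃
  | congIte {Γ Φ₁ Φ₁' Φ₂ Φ₂'} (φ : MSO A) :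
      CoreDeriv Γ Φ₁ Φ₁' → CoreDeriv Γ Φ₂ Φ₂' →
      CoreDeriv Γ (.ite φ Φ₁ Φ₂) (.ite φ Φ₁' Φ₂')
  | congAdd {Γ Φ₁ Φ₁' Φ₂ Φ₂'} :
      CoreDeriv Γ Φ₁ Φ₁' → CoreDeriv Γ Φ₂ Φ₂' →
      CoreDeriv Γ (.add Φ₁ Φ₂) (.add Φ₁' Φ₂')
  | c1 (Γ : Set (MSO A)) (Φ : Core A R) : CoreDeriv Γ (Φ.add .zero) Φ
  | c2 (Γ : Set (MSO A)) (Φ₁ Φ₂ : Core A R) : CoreDeriv Γ (Φ₁.add Φ₂) (Φ₂.add Φ₁)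
  | c3 (Γ : Set (MSO A)) (Φ₁ Φ₂ Φ₃ : Core A R) :
      CoreDeriv Γ ((Φ₁.add Φ₂).add Φ₃) (Φ₁.add (Φ₂.add Φ₃))
  | c4 {Γ : Set (MSO A)} {Ψ₁ Ψ₂ : Step A R} (x : ℕ) :
      (∀ ψ ∈ Γ, ¬ ψ.FreeFO x) → StepDeriv Γ Ψ₁ Ψ₂ →
      CoreDeriv Γ (.prod x Ψ₁) (.prod x Ψ₂)
  | c5 (Γ : Set (MSO A)) (x y : ℕ) (Ψ : Step A R) :
      ¬ Ψ.OccFO y → CoreDeriv Γ (.prod x Ψ) (.prod y (Ψ.renFO x y))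
  | c6 {Γ Φ₁ Φ₂} (φ : MSO A) : CoreDeriv Γ Φ₁ Φ₂ → CoreDeriv (insert φ Γ) Φ₁ Φ₂
  | c7 (Γ : Set (MSO A)) (φ : MSO A) (Φ₁ Φ₂ : Core A R) :
      CoreDeriv Γ (.ite (.not φ) Φ₁ Φ₂) (.ite φ Φ₂ Φ₁)
  | c8 {Γ : Set (MSO A)} {φ : MSO A} (Φ₁ Φ₂ : Core A R) :
      Entails Γ φ → CoreDeriv Γ (.ite φ Φ₁ Φ₂) Φ₁
  | c9 {Γ : Set (MSO A)} {φ : MSO A} {Φ₁ Φ₂ Φ : Core A R} :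
      CoreDeriv (insert φ Γ) Φ₁ Φ → CoreDeriv (insert (.not φ) Γ) Φ₂ Φ →
      CoreDeriv Γ (.ite φ Φ₁ Φ₂) Φ
  | c10 (Γ : Set (MSO A)) (φ : MSO A) (Φ' Φ'' Φ : Core A R) :
      CoreDeriv Γ ((Core.ite φ Φ' Φ'').add Φ) (.ite φ (Φ'.add Φ) (Φ''.add Φ))
  | c11 {Γ : Set (MSO A)} {Φ₁ Φ₂ : Core A R} (X : ℕ) :
      (∀ ψ ∈ Γ, ¬ ψ.FreeSO X) → CoreDeriv Γ Φ₁ Φ₂ →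
      CoreDeriv Γ (.sumSO X Φ₁) (.sumSO X Φ₂)
  | c11fo {Γ : Set (MSO A)} {Φ₁ Φ₂ : Core A R} (x : ℕ) :
      (∀ ψ ∈ Γ, ¬ ψ.FreeFO x) → CoreDeriv Γ Φ₁ Φ₂ →
      CoreDeriv Γ (.sumFO x Φ₁) (.sumFO x Φ₂)
  | c12 (Γ : Set (MSO A)) (X Y : ℕ) (Φ : Core A R) :
      ¬ Φ.OccSO Y → CoreDeriv Γ (.sumSO X Φ) (.sumSO Y (Φ.renSO X Y))
  | c12fo (Γ : Set (MSO A)) (x y : ℕ) (Φ : Core A R) :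
      ¬ Φ.OccFO y → CoreDeriv Γ (.sumFO x Φ) (.sumFO y (Φ.renFO x y))
  | c13 (Γ : Set (MSO A)) (X Y : ℕ) (Φ : Core A R) :
      CoreDeriv Γ (.sumSO X (.sumSO Y Φ)) (.sumSO Y (.sumSO X Φ))
  | c13fo (Γ : Set (MSO A)) (x y : ℕ) (Φ : Core A R) :
      CoreDeriv Γ (.sumFO x (.sumFO y Φ)) (.sumFO y (.sumFO x Φ))
  | c14 (Γ : Set (MSO A)) (X : ℕ) (Φ₁ Φ₂ : Core A R) :
      CoreDeriv Γ (.sumSO X (Φ₁.add Φ₂)) ((Core.sumSO X Φ₁).add (.sumSO X Φ₂))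
  | c14fo (Γ : Set (MSO A)) (x : ℕ) (Φ₁ Φ₂ : Core A R) :
      CoreDeriv Γ (.sumFO x (Φ₁.add Φ₂)) ((Core.sumFO x Φ₁).add (.sumFO x Φ₂))
  | c15 (Γ : Set (MSO A)) (X : ℕ) (φ : MSO A) (Φ₁ Φ₂ : Core A R) :
      ¬ φ.FreeSO X →
      CoreDeriv Γ (.ite φ (.sumSO X Φ₁) (.sumSO X Φ₂)) (.sumSO X (.ite φ Φ₁ Φ₂))
  | c15fo (Γ : Set (MSO A)) (x : ℕ) (φ : MSO A) (Φ₁ Φ₂ : Core A R) :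
      ¬ φ.FreeFO x →
      CoreDeriv Γ (.ite φ (.sumFO x Φ₁) (.sumFO x Φ₂)) (.sumFO x (.ite φ Φ₁ Φ₂))
  | c16 (Γ : Set (MSO A)) (X : ℕ) (φ : MSO A) (Φ : Core A R) :
      (∀ m : WVal A, SatAll Γ m → ∃! I : Finset (Fin m.word.length), φ.Sat (m.updSO X I)) →
      ¬ Φ.OccSO X → CoreDeriv Γ Φ (.sumSO X (.ite φ Φ .zero))
  | c16fo (Γ : Set (MSO A)) (x : ℕ) (φ : MSO A) (Φ : Core A R) :
      (∀ m : WVal A, SatAll Γ m → ∃! i : Fin m.word.length, φ.Sat (m.updFO x i)) →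
      ¬ Φ.OccFO x → CoreDeriv Γ Φ (.sumFO x (.ite φ Φ .zero))

/-! ### Weighted automata -/

/-- An `R`-weighted automaton over `A` with state type `Q`
(transition relation `delta`, weight function `wgt`, initial states `start`,
final states `final`). -/
structure WA (A R Q : Type) where
  delta : Q → A → Q → Prop
  wgt : Q → A → Q → R
  start : Set Q
  final : Set Q

/-- A run of the automaton on `w`, described by its sequence of states, is
accepting if it starts in an initial state, ends in a final state, and each
step is a transition. -/
def WA.IsAccRun {Q : Type} (M : WA A R Q) (w : List A) (qs : Fin (w.length + 1) → Q) : Prop :=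
  qs 0 ∈ M.start ∧ qs (Fin.last w.length) ∈ M.final ∧
    ∀ i : Fin w.length, M.delta (qs i.castSucc) (w.get i) (qs i.succ)

/-- The weight of a run: the word of the weights of its transitions. -/
def WA.runWeight {Q : Type} (M : WA A R Q) (w : List A) (qs : Fin (w.length + 1) → Q) : List R :=
  List.ofFn fun i : Fin w.length => M.wgt (qs i.castSucc) (w.get i) (qs i.succ)

open Classical in
/-- The abstract semantics of a weighted automaton: the multiset of the
weights of its accepting runs on `w`. -/
noncomputable def WA.sem {Q : Type} [Fintype Q] [DecidableEq Q] (M : WA A R Q)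
    (w : List A) : Multiset (List R) :=
  ((Finset.univ.filter (M.IsAccRun w)).val).map (M.runWeight w)

/-! ### Auxiliary lemmas for statement 15 -/

section Aux

variable {A R : Type}

lemma satAll_insert {Γ : Set (MSO A)} {φ : MSO A} {m : WVal A} :
    SatAll (insert φ Γ) m ↔ φ.Sat m ∧ SatAll Γ m := by
  simp [SatAll]

lemma sat_or {φ ψ : MSO A} {m : WVal A} : (φ.or ψ).Sat m ↔ φ.Sat m ∨ ψ.Sat m := by
  simp [MSO.or, MSO.Sat]; tauto

lemma sat_bigOr {l : List (MSO A)} {m : WVal A} :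
    (bigOr l).Sat m ↔ ∃ φ ∈ l, φ.Sat m := by
  induction l with
  | nil => simp [bigOr, MSO.Sat]
  | cons φ l ih => simp [bigOr, sat_or, ih]

lemma freeFO_occFO {φ : MSO A} {x : ℕ} (h : φ.FreeFO x) : φ.OccFO x := by
  induction φ with
  | top => exact h
  | pred a z => exact h
  | le z w => exact h
  | mem z Z => exact h
  | not φ ih => exact ih h
  | and φ ψ ih₁ ih₂ => exact h.imp ih₁ ih₂
  | allFO z φ ih => exact Or.inr (ih h.2)
  | allSO Z φ ih => exact ih h

/-- Coincidence lemma for MSO satisfaction. -/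
lemma sat_ext (φ : MSO A) : ∀ (w : List A) (hw : w ≠ []) (fo₁ fo₂ : ℕ → Fin w.length)
    (so₁ so₂ : ℕ → Finset (Fin w.length)),
    (∀ v, φ.FreeFO v → fo₁ v = fo₂ v) → (∀ V, φ.FreeSO V → so₁ V = so₂ V) →
    (φ.Sat ⟨w, hw, fo₁, so₁⟩ ↔ φ.Sat ⟨w, hw, fo₂, so₂⟩) := by
  induction φ with
  | top => intros; rfl
  | pred a z =>
      intro w hw fo₁ fo₂ so₁ so₂ hfo hso
      simp only [MSO.Sat, hfo z rfl]
  | le z u =>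
      intro w hw fo₁ fo₂ so₁ so₂ hfo hso
      simp only [MSO.Sat, hfo z (Or.inl rfl), hfo u (Or.inr rfl)]
  | mem z Z =>
      intro w hw fo₁ fo₂ so₁ so₂ hfo hso
      simp only [MSO.Sat, hfo z rfl, hso Z rfl]
  | not φ ih =>
      intro w hw fo₁ fo₂ so₁ so₂ hfo hso
      exact not_congr (ih w hw fo₁ fo₂ so₁ so₂ hfo hso)
  | and φ ψ ih₁ ih₂ =>
      intro w hw fo₁ fo₂ so₁ so₂ hfo hso
      exact and_congr (ih₁ w hw fo₁ fo₂ so₁ so₂ (fun v hv => hfo v (Or.inl hv)) (fun V hV => hso V (Or.inl hV)))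
        (ih₂ w hw fo₁ fo₂ so₁ so₂ (fun v hv => hfo v (Or.inr hv)) (fun V hV => hso V (Or.inr hV)))
  | allFO z φ ih =>
      intro w hw fo₁ fo₂ so₁ so₂ hfo hso
      refine forall_congr' fun i => ih w hw _ _ so₁ so₂ (fun v hv => ?_) hso
      by_cases hvz : v = z
      · subst hvz; simp
      · rw [Function.update_of_ne hvz, Function.update_of_ne hvz]
        exact hfo v ⟨fun h => hvz h.symm, hv⟩
  | allSO Z φ ih =>
      intro w hw fo₁ fo₂ so₁ so₂ hfo hso
      refine forall_congr' fun I => ih w hw fo₁ fo₂ _ _ hfo (fun V hV => ?_)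
      by_cases hVZ : V = Z
      · subst hVZ; simp
      · rw [Function.update_of_ne hVZ, Function.update_of_ne hVZ]
        exact hso V ⟨fun h => hVZ h.symm, hV⟩

lemma sat_updFO_not_free {φ : MSO A} {m : WVal A} {x : ℕ} {i : Fin m.word.length}
    (h : ¬φ.FreeFO x) : φ.Sat (m.updFO x i) ↔ φ.Sat m := by
  obtain ⟨w, hw, fo, so⟩ := m
  exact sat_ext φ w hw _ fo so so
    (fun v hv => Function.update_of_ne (by rintro rfl; exact h hv) _ _) (fun _ _ => rfl)

lemma satAll_updFO {Γ : Set (MSO A)} {m : WVal A} {x : ℕ} {i : Fin m.word.length}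
    (h : ∀ ψ ∈ Γ, ¬MSO.FreeFO x ψ) (hm : SatAll Γ m) : SatAll Γ (m.updFO x i) :=
  fun ψ hψ => (sat_updFO_not_free (h ψ hψ)).2 (hm ψ hψ)

lemma updFO_self (m : WVal A) (x : ℕ) : m.updFO x (m.fo x) = m := by
  obtain ⟨w, hw, fo, so⟩ := m
  simp [WVal.updFO]

/-- Coincidence lemma for step-wMSO semantics (same `so`). -/
lemma step_ext (Ψ : Step A R) : ∀ (w : List A) (hw : w ≠ []) (fo₁ fo₂ : ℕ → Fin w.length)
    (so : ℕ → Finset (Fin w.length)),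
    (∀ v, Ψ.OccFO v → fo₁ v = fo₂ v) →
    Ψ.sem ⟨w, hw, fo₁, so⟩ = Ψ.sem ⟨w, hw, fo₂, so⟩ := by
  induction Ψ with
  | const r => intros; rfl
  | ite φ Ψ₁ Ψ₂ ih₁ ih₂ =>
      intro w hw fo₁ fo₂ so hfo
      have hφ : φ.Sat ⟨w, hw, fo₁, so⟩ ↔ φ.Sat ⟨w, hw, fo₂, so⟩ :=
        sat_ext φ w hw fo₁ fo₂ so so
          (fun v hv => hfo v (Or.inl (freeFO_occFO hv))) (fun _ _ => rfl)
      by_cases h : φ.Sat ⟨w, hw, fo₂, so⟩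
      · rw [Step.sem, Step.sem, if_pos (hφ.2 h), if_pos h]
        exact ih₁ w hw fo₁ fo₂ so (fun v hv => hfo v (Or.inr (Or.inl hv)))
      · rw [Step.sem, Step.sem, if_neg (fun h' => h (hφ.1 h')), if_neg h]
        exact ih₂ w hw fo₁ fo₂ so (fun v hv => hfo v (Or.inr (Or.inr hv)))

end Aux

section Aux2

variable {A R : Type}

/-- Renaming lemma for MSO satisfaction. -/
lemma sat_ren (φ : MSO A) : ∀ (m : WVal A) (x y : ℕ), ¬φ.OccFO y →
    ((φ.renFO x y).Sat m ↔ φ.Sat (m.updFO x (m.fo y))) := by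
  induction φ with
  | top =>
      intro m x y hy; rfl
  | pred a z =>
      intro m x y hy
      obtain ⟨w, hw, fo, so⟩ := m
      simp only [MSO.renFO, MSO.Sat, WVal.updFO, rn]
      rcases eq_or_ne z x with rfl | hz
      · simp
      · simp [if_neg hz, Function.update_of_ne hz]
  | le z u =>
      intro m x y hy
      obtain ⟨w, hw, fo, so⟩ := m
      simp only [MSO.renFO, MSO.Sat, WVal.updFO, rn]
      rcases eq_or_ne z x with rfl | hz
      · rcases eq_or_ne u z with rfl | hu
        · simp
        · simp [if_neg hu, Function.update_of_ne hu]
      · rcases eq_or_ne u x with rfl | hu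
        · simp [if_neg hz, Function.update_of_ne hz]
        · simp [if_neg hz, if_neg hu, Function.update_of_ne hu, Function.update_of_ne hz]
  | mem z Z =>
      intro m x y hy
      obtain ⟨w, hw, fo, so⟩ := m
      simp only [MSO.renFO, MSO.Sat, WVal.updFO, rn]
      rcases eq_or_ne z x with rfl | hz
      · simp; exact Iff.rfl
      · simp [if_neg hz, Function.update_of_ne hz]; exact Iff.rfl
  | not φ ih =>
      intro m x y hy
      exact not_congr (ih m x y hy)
  | and φ ψ ih₁ ih₂ =>
      intro m x y hy
      exact and_congr (ih₁ m x y fun h => hy (Or.inl h)) (ih₂ m x y fun h => hy (Or.inr h))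
  | allFO z φ ih =>
      intro m x y hy
      have hzy : z ≠ y := fun h => hy (Or.inl h)
      have hyφ : ¬φ.OccFO y := fun h => hy (Or.inr h)
      obtain ⟨w, hw, fo, so⟩ := m
      simp only [MSO.renFO, rn]
      by_cases hz : z = x
      · subst hz
        simp only [if_pos rfl]
        show (∀ i, (φ.renFO z y).Sat _) ↔ (∀ i, φ.Sat _)
        refine forall_congr' fun i => Iff.trans (ih _ z y hyφ) ?_
        simp only [WVal.updFO]
        refine Iff.trans (sat_ext φ w hw _ (Function.update fo z i) so so (fun v hv => ?_) (fun _ _ => rfl)) ?_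
        · by_cases hvz : v = z
          · subst hvz; simp [Function.update_of_ne hzy]
          · by_cases hvy : v = y
            · exact absurd (hvy ▸ hv : φ.FreeFO y) (fun h => hyφ (freeFO_occFO h))
            · simp [Function.update_of_ne hvz, Function.update_of_ne hvy]
        · have : Function.update (Function.update fo z (fo y)) z i = Function.update fo z i := by
            simp
          rw [this]
      · simp only [if_neg hz]
        show (∀ i, (φ.renFO x y).Sat _) ↔ (∀ i, φ.Sat _)
        refine forall_congr' fun i => Iff.trans (ih _ x y hyφ) ?_
        simp only [WVal.updFO]
        have h1 : Function.update fo z i y = fo y := Function.update_of_ne (fun h => hzy h.symm) _ _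
        rw [h1, Function.update_comm hz]
  | allSO Z φ ih =>
      intro m x y hy
      obtain ⟨w, hw, fo, so⟩ := m
      show (∀ I, (φ.renFO x y).Sat _) ↔ (∀ I, φ.Sat _)
      exact forall_congr' fun I => ih _ x y hy

/-- Renaming lemma for step-wMSO semantics. -/
lemma step_ren (Ψ : Step A R) : ∀ (m : WVal A) (x y : ℕ), ¬Ψ.OccFO y →
    (Ψ.renFO x y).sem m = Ψ.sem (m.updFO x (m.fo y)) := by
  induction Ψ with
  | const r => intros; rfl
  | ite φ Ψ₁ Ψ₂ ih₁ ih₂ =>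
      intro m x y hy
      have hφ : (φ.renFO x y).Sat m ↔ φ.Sat (m.updFO x (m.fo y)) :=
        sat_ren φ m x y (fun h => hy (Or.inl h))
      by_cases h : φ.Sat (m.updFO x (m.fo y))
      · rw [Step.renFO, Step.sem, if_pos (hφ.2 h), Step.sem, if_pos h]
        exact ih₁ m x y (fun h' => hy (Or.inr (Or.inl h')))
      · rw [Step.renFO, Step.sem, if_neg (fun h' => h (hφ.1 h')), Step.sem, if_neg h]
        exact ih₂ m x y (fun h' => hy (Or.inr (Or.inr h')))

lemma sem_mem_weights [DecidableEq R] (Ψ : Step A R) (m : WVal A) : Ψ.sem m ∈ Ψ.weights := by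
  induction Ψ with
  | const r => simp [Step.sem, Step.weights]
  | ite φ Ψ₁ Ψ₂ ih₁ ih₂ =>
      rw [Step.sem]
      by_cases h : φ.Sat m
      · rw [if_pos h, Step.weights]; exact Finset.mem_union_left _ ih₁
      · rw [if_neg h, Step.weights]; exact Finset.mem_union_right _ ih₂

lemma sat_phiOf [DecidableEq R] (Ψ : Step A R) (r : R) (m : WVal A) :
    (phiOf Ψ r).Sat m ↔ Ψ.sem m = r := by
  induction Ψ with
  | const r' =>
      by_cases h : r' = r <;> simp [phiOf, h, MSO.Sat, Step.sem]
  | ite φ Ψ₁ Ψ₂ ih₁ ih₂ =>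
      rw [phiOf, sat_or]
      by_cases h : φ.Sat m
      · simp [MSO.Sat, h, Step.sem, ih₁, ih₂]
      · simp [MSO.Sat, h, Step.sem, ih₁, ih₂]

/-- The MSO formula expressing that two step formulas produce the same letter
at every position (for product variable `x`). -/
noncomputable def eqPhi [DecidableEq R] (x : ℕ) (Ψ Ψ' : Step A R) : MSO A :=
  .allFO x (bigOr (Ψ.weights.toList.map fun r => .and (phiOf Ψ r) (phiOf Ψ' r)))

lemma sat_eqPhi [DecidableEq R] {x : ℕ} {Ψ Ψ' : Step A R} {m : WVal A} :
    (eqPhi x Ψ Ψ').Sat m ↔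
      ∀ i : Fin m.word.length, Ψ.sem (m.updFO x i) = Ψ'.sem (m.updFO x i) := by
  show (∀ i, (bigOr _).Sat (m.updFO x i)) ↔ _
  refine forall_congr' fun i => ?_
  rw [sat_bigOr]
  constructor
  · rintro ⟨χ, hχ, hsat⟩
    obtain ⟨r, _, rfl⟩ := List.mem_map.1 hχ
    obtain ⟨h1, h2⟩ := hsat
    rw [(sat_phiOf _ _ _).1 h1, (sat_phiOf _ _ _).1 h2]
  · intro h
    refine ⟨.and (phiOf Ψ (Ψ.sem (m.updFO x i))) (phiOf Ψ' (Ψ.sem (m.updFO x i))),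
      List.mem_map.2 ⟨_, Finset.mem_toList.2 (sem_mem_weights _ _), rfl⟩, ?_, ?_⟩
    · exact (sat_phiOf _ _ _).2 rfl
    · exact (sat_phiOf _ _ _).2 h.symm

lemma eqPhi_not_free [DecidableEq R] {x : ℕ} {Ψ Ψ' : Step A R} :
    ¬(eqPhi x Ψ Ψ').FreeFO x := fun h => h.1 rfl

end Aux2

section Aux3

variable {A R : Type}

/-- Soundness of the step-wMSO proof system. -/
lemma stepSound {Γ : Set (MSO A)} {Ψ₁ Ψ₂ : Step A R} (h : StepDeriv Γ Ψ₁ Ψ₂) :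
    StepEquiv Γ Ψ₁ Ψ₂ := by
  induction h with
  | refl Γ Ψ => intro m hm; rfl
  | symm _ ih => intro m hm; exact (ih m hm).symm
  | trans _ _ ih₁ ih₂ => intro m hm; exact (ih₁ m hm).trans (ih₂ m hm)
  | congIte φ _ _ ih₁ ih₂ =>
      intro m hm
      by_cases hφ : φ.Sat m
      · rw [Step.sem, Step.sem, if_pos hφ, if_pos hφ, ih₁ m hm]
      · rw [Step.sem, Step.sem, if_neg hφ, if_neg hφ, ih₂ m hm]
  | s1 φ _ ih => intro m hm; exact ih m fun ψ hψ => hm ψ (Set.mem_insert_iff.2 (Or.inr hψ))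
  | s2 Γ φ Ψ₁ Ψ₂ =>
      intro m hm
      by_cases hφ : φ.Sat m
      · rw [Step.sem, if_neg (by simpa [MSO.Sat] using hφ), Step.sem, if_pos hφ]
      · rw [Step.sem, if_pos (by simpa [MSO.Sat] using hφ), Step.sem, if_neg hφ]
  | s3 Ψ₁ Ψ₂ hent => intro m hm; rw [Step.sem, if_pos (hent m hm)]
  | @s4 Γ' φ Ψa Ψb Ψ _ _ ih₁ ih₂ =>
      intro m hm
      by_cases hφ : φ.Sat m
      · rw [Step.sem, if_pos hφ]
        exact ih₁ m (satAll_insert.2 ⟨hφ, hm⟩)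
      · rw [Step.sem, if_neg hφ]
        exact ih₂ m (satAll_insert.2 ⟨(by simpa [MSO.Sat] using hφ), hm⟩)

lemma stepUnsat {Γ : Set (MSO A)} (h : ∀ m : WVal A, ¬SatAll Γ m) (Ψ₁ Ψ₂ : Step A R) :
    StepDeriv Γ Ψ₁ Ψ₂ := by
  have e1 : Entails Γ (MSO.not .top) := fun m hm => absurd hm (h m)
  have e2 : Entails Γ (.top : MSO A) := fun m _ => trivial
  exact .trans (.symm (.s3 Ψ₁ Ψ₂ e1)) (.trans (.s2 Γ .top Ψ₁ Ψ₂) (.s3 Ψ₂ Ψ₁ e2))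

/-- Completeness of the step-wMSO proof system. -/
lemma stepComplete : ∀ (Ψ₁ Ψ₂ : Step A R) (Γ : Set (MSO A)),
    StepEquiv Γ Ψ₁ Ψ₂ → StepDeriv Γ Ψ₁ Ψ₂ := by
  intro Ψ₁
  induction Ψ₁ with
  | const r =>
      intro Ψ₂
      induction Ψ₂ with
      | const r' =>
          intro Γ h
          by_cases hs : ∃ m : WVal A, SatAll Γ m
          · obtain ⟨m, hm⟩ := hs
            have := h m hm
            rw [Step.sem, Step.sem] at this
            exact this ▸ .refl Γ _
          · exact stepUnsat (by push_neg at hs; exact hs) _ _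
      | ite φ a b iha ihb =>
          intro Γ h
          refine .symm (.s4 (.symm (iha _ fun m hm => ?_)) (.symm (ihb _ fun m hm => ?_)))
          · rw [satAll_insert] at hm
            rw [h m hm.2, Step.sem, if_pos hm.1]
          · rw [satAll_insert] at hm
            rw [h m hm.2, Step.sem, if_neg (by simpa [MSO.Sat] using hm.1)]
  | ite φ a b iha ihb =>
      intro Ψ₂ Γ h
      refine .s4 (iha _ _ fun m hm => ?_) (ihb _ _ fun m hm => ?_)
      · rw [satAll_insert] at hm
        rw [← h m hm.2, Step.sem, if_pos hm.1]
      · rw [satAll_insert] at hm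
        rw [← h m hm.2, Step.sem, if_neg (by simpa [MSO.Sat] using hm.1)]

/-- Soundness of the core-wMSO(?,+) proof system. -/
lemma corePSound {Γ : Set (MSO A)} {Φ₁ Φ₂ : CoreP A R} (h : CorePDeriv Γ Φ₁ Φ₂) :
    CorePEquiv Γ Φ₁ Φ₂ := by
  induction h with
  | refl Γ Φ => intro m hm; rfl
  | symm _ ih => intro m hm; exact (ih m hm).symm
  | trans _ _ ih₁ ih₂ => intro m hm; exact (ih₁ m hm).trans (ih₂ m hm)
  | congIte φ _ _ ih₁ ih₂ =>
      intro m hm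
      by_cases hφ : φ.Sat m
      · rw [CoreP.sem, CoreP.sem, if_pos hφ, if_pos hφ, ih₁ m hm]
      · rw [CoreP.sem, CoreP.sem, if_neg hφ, if_neg hφ, ih₂ m hm]
  | congAdd _ _ ih₁ ih₂ =>
      intro m hm
      rw [CoreP.sem, CoreP.sem, ih₁ m hm, ih₂ m hm]
  | c1 Γ Φ => intro m hm; rw [CoreP.sem]; exact add_zero _
  | c2 Γ Φ₁ Φ₂ => intro m hm; rw [CoreP.sem, CoreP.sem]; exact add_comm _ _
  | c3 Γ Φ₁ Φ₂ Φ₃ =>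
      intro m hm
      rw [CoreP.sem, CoreP.sem, CoreP.sem, CoreP.sem]
      exact add_assoc _ _ _
  | c4 x hfree hstep =>
      intro m hm
      rw [CoreP.sem, CoreP.sem]
      exact congrArg (fun l => ({l} : Multiset (List R)))
        (congrArg List.ofFn (funext fun i => stepSound hstep _ (satAll_updFO hfree hm)))
  | c5 Γ x y Ψ hy =>
      intro m hm
      rw [CoreP.sem, CoreP.sem]
      refine congrArg (fun l => ({l} : Multiset (List R)))
        (congrArg List.ofFn (funext fun i => ?_))
      rw [step_ren Ψ _ x y hy]
      obtain ⟨w, hw, fo, so⟩ := m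
      show Ψ.sem ⟨w, hw, Function.update fo x i, so⟩ =
        Ψ.sem ⟨w, hw, Function.update (Function.update fo y i) x
          (Function.update fo y i y), so⟩
      rw [Function.update_self]
      refine step_ext Ψ w hw _ _ so fun v hv => ?_
      by_cases hvx : v = x
      · subst hvx; simp
      · have hvy : v ≠ y := by rintro rfl; exact hy hv
        simp [Function.update_of_ne hvx, Function.update_of_ne hvy]
  | c6 φ _ ih => intro m hm; exact ih m fun ψ hψ => hm ψ (Set.mem_insert_iff.2 (Or.inr hψ))
  | c7 Γ φ Φ₁ Φ₂ =>
      intro m hm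
      by_cases hφ : φ.Sat m
      · rw [CoreP.sem, if_neg (by simpa [MSO.Sat] using hφ), CoreP.sem, if_pos hφ]
      · rw [CoreP.sem, if_pos (by simpa [MSO.Sat] using hφ), CoreP.sem, if_neg hφ]
  | c8 Φ₁ Φ₂ hent => intro m hm; rw [CoreP.sem, if_pos (hent m hm)]
  | @c9 Γ' φ Φa Φb Φ _ _ ih₁ ih₂ =>
      intro m hm
      by_cases hφ : φ.Sat m
      · rw [CoreP.sem, if_pos hφ]
        exact ih₁ m (satAll_insert.2 ⟨hφ, hm⟩)
      · rw [CoreP.sem, if_neg hφ]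
        exact ih₂ m (satAll_insert.2 ⟨(by simpa [MSO.Sat] using hφ), hm⟩)
  | c10 Γ φ Φ' Φ'' Φ =>
      intro m hm
      by_cases hφ : φ.Sat m <;> simp [CoreP.sem, hφ]

lemma corePUnsat {Γ : Set (MSO A)} (h : ∀ m : WVal A, ¬SatAll Γ m) (Φ₁ Φ₂ : CoreP A R) :
    CorePDeriv Γ Φ₁ Φ₂ := by
  have e1 : Entails Γ (MSO.not .top) := fun m hm => absurd hm (h m)
  have e2 : Entails Γ (.top : MSO A) := fun m _ => trivial
  exact .trans (.symm (.c8 Φ₁ Φ₂ e1)) (.trans (.c7 Γ .top Φ₁ Φ₂) (.c8 Φ₂ Φ₁ e2))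

lemma corePCaseSplit {Γ : Set (MSO A)} {Φ₁ Φ₂ : CoreP A R} (φ : MSO A)
    (h1 : CorePDeriv (insert φ Γ) Φ₁ Φ₂) (h2 : CorePDeriv (insert (.not φ) Γ) Φ₁ Φ₂) :
    CorePDeriv Γ Φ₁ Φ₂ :=
  .trans (.symm (.c9 (.refl _ Φ₁) (.refl _ Φ₁))) (.c9 h1 h2)

end Aux3

section Aux4

variable {A R : Type}

@[simp] lemma sumProds_nil {x : ℕ} : sumProds x ([] : List (Step A R)) = .zero := rfl

@[simp] lemma sumProds_cons {x : ℕ} {Ψ : Step A R} {L : List (Step A R)} :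
    sumProds x (Ψ :: L) = .add (.prod x Ψ) (sumProds x L) := rfl

lemma sumProds_append (Γ : Set (MSO A)) (x : ℕ) (L₁ L₂ : List (Step A R)) :
    CorePDeriv Γ (.add (sumProds x L₁) (sumProds x L₂)) (sumProds x (L₁ ++ L₂)) := by
  induction L₁ with
  | nil => exact .trans (.c2 ..) (.c1 ..)
  | cons Ψ L ih => exact .trans (.c3 ..) (.congAdd (.refl ..) ih)

lemma sumProds_perm (Γ : Set (MSO A)) (x : ℕ) {L L' : List (Step A R)} (h : L.Perm L') :
    CorePDeriv Γ (sumProds x L) (sumProds x L') := by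
  induction h with
  | nil => exact .refl _ _
  | cons a _ ih => exact .congAdd (.refl _ _) ih
  | swap a b l => exact .trans (.symm (.c3 ..)) (.trans (.congAdd (.c2 ..) (.refl ..)) (.c3 ..))
  | trans _ _ ih₁ ih₂ => exact .trans ih₁ ih₂

/-- The word produced by `∏_x Ψ` at `m`. -/
noncomputable def wordOf (x : ℕ) (m : WVal A) (Ψ : Step A R) : List R :=
  List.ofFn fun i => Ψ.sem (m.updFO x i)

lemma sumProds_sem (x : ℕ) (L : List (Step A R)) (m : WVal A) :
    (sumProds x L).sem m = ((L.map (wordOf x m) : List (List R)) : Multiset (List R)) := by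
  induction L with
  | nil => simp [CoreP.sem]
  | cons Ψ L ih =>
      show CoreP.sem (.add (.prod x Ψ) (sumProds x L)) m = _
      rw [CoreP.sem, CoreP.sem, ih]
      simp [wordOf, Multiset.cons_coe, Multiset.singleton_add]

/-- Normal forms: conditional trees (with `x` not free in the conditions)
whose leaves are sums of products over `x`. -/
inductive NFx (x : ℕ) : CoreP A R → Prop
  | leaf (L : List (Step A R)) : NFx x (sumProds x L)
  | ite {N₁ N₂ : CoreP A R} (φ : MSO A) (hφ : ¬φ.FreeFO x) :
      NFx x N₁ → NFx x N₂ → NFx x (.ite φ N₁ N₂)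

lemma addNF_leaf {x : ℕ} (L₁ : List (Step A R)) : ∀ {N₂ : CoreP A R}, NFx x N₂ →
    ∃ N, NFx x N ∧ ∀ Γ, CorePDeriv Γ (.add (sumProds x L₁) N₂) N := by
  intro N₂ h
  induction h with
  | leaf L₂ => exact ⟨sumProds x (L₁ ++ L₂), .leaf _, fun Γ => sumProds_append ..⟩
  | ite φ hφ h₁ h₂ ih₁ ih₂ =>
      obtain ⟨Na, hNa, da⟩ := ih₁
      obtain ⟨Nb, hNb, db⟩ := ih₂
      refine ⟨.ite φ Na Nb, .ite φ hφ hNa hNb, fun Γ => ?_⟩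
      exact .trans (.c2 ..) (.trans (.c10 ..)
        (.congIte φ (.trans (.c2 ..) (da Γ)) (.trans (.c2 ..) (db Γ))))

lemma addNF {x : ℕ} : ∀ {N₁ : CoreP A R}, NFx x N₁ → ∀ {N₂ : CoreP A R}, NFx x N₂ →
    ∃ N, NFx x N ∧ ∀ Γ, CorePDeriv Γ (.add N₁ N₂) N := by
  intro N₁ h₁
  induction h₁ with
  | leaf L₁ => exact fun h₂ => addNF_leaf L₁ h₂
  | ite φ hφ ha hb iha ihb =>
      intro N₂ h₂
      obtain ⟨Na, hNa, da⟩ := iha h₂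
      obtain ⟨Nb, hNb, db⟩ := ihb h₂
      exact ⟨.ite φ Na Nb, .ite φ hφ hNa hNb,
        fun Γ => .trans (.c10 ..) (.congIte φ (da Γ) (db Γ))⟩

lemma flatten (x : ℕ) : ∀ (Φ : CoreP A R), ¬Φ.OccFO x →
    ∃ N, NFx x N ∧ ∀ Γ, CorePDeriv Γ Φ N := by
  intro Φ
  induction Φ with
  | zero => exact fun _ => ⟨sumProds x [], .leaf [], fun Γ => .refl _ _⟩
  | prod z Ψ =>
      intro h
      have hz : ¬Ψ.OccFO x := fun h' => h (Or.inr h')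
      exact ⟨sumProds x [Ψ.renFO z x], .leaf _,
        fun Γ => .trans (.c5 Γ z x Ψ hz) (.symm (.c1 ..))⟩
  | ite φ a b iha ihb =>
      intro h
      obtain ⟨Na, hNa, da⟩ := iha (fun h' => h (Or.inr (Or.inl h')))
      obtain ⟨Nb, hNb, db⟩ := ihb (fun h' => h (Or.inr (Or.inr h')))
      exact ⟨.ite φ Na Nb, .ite φ (fun h' => h (Or.inl (freeFO_occFO h'))) hNa hNb,
        fun Γ => .congIte φ (da Γ) (db Γ)⟩
  | add a b iha ihb =>
      intro h
      obtain ⟨Na, hNa, da⟩ := iha (fun h' => h (Or.inl h'))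
      obtain ⟨Nb, hNb, db⟩ := ihb (fun h' => h (Or.inr h'))
      obtain ⟨N, hN, d⟩ := addNF hNa hNb
      exact ⟨N, hN, fun Γ => .trans (.congAdd (da Γ) (db Γ)) (d Γ)⟩

lemma splitList {Φ₁ Φ₂ : CoreP A R} (x : ℕ) :
    ∀ (ψs : List (MSO A)), (∀ ψ ∈ ψs, ¬ψ.FreeFO x) →
    ∀ (Δ : Set (MSO A)), (∀ χ ∈ Δ, ¬χ.FreeFO x) → Entails Δ (bigOr ψs) →
    (∀ ψ ∈ ψs, ∀ Δ' : Set (MSO A), Δ ⊆ Δ' → (∀ χ ∈ Δ', ¬χ.FreeFO x) →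
      CorePDeriv (insert ψ Δ') Φ₁ Φ₂) →
    CorePDeriv Δ Φ₁ Φ₂ := by
  intro ψs
  induction ψs with
  | nil =>
      intro _ Δ _ hent _
      refine corePUnsat (fun m hm => ?_) _ _
      have := hent m hm
      simp [bigOr, MSO.Sat] at this
  | cons ψ rest ih =>
      intro hfree Δ hΔ hent H
      refine corePCaseSplit ψ (H ψ List.mem_cons_self Δ (fun _ h => h) hΔ) ?_
      refine ih (fun χ hχ => hfree χ (List.mem_cons_of_mem _ hχ)) (insert (.not ψ) Δ)
        (fun χ hχ => ?_) (fun m hm => ?_)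
        (fun χ hχ Δ' hsub hΔ' => H χ (List.mem_cons_of_mem _ hχ) Δ'
          (fun a ha => hsub (Set.mem_insert_iff.2 (Or.inr ha))) hΔ')
      · rcases Set.mem_insert_iff.1 hχ with rfl | hχ
        · exact hfree ψ List.mem_cons_self
        · exact hΔ χ hχ
      · rw [satAll_insert] at hm
        have h2 := hent m hm.2
        rw [show bigOr (ψ :: rest) = ψ.or (bigOr rest) from rfl, sat_or] at h2
        exact h2.resolve_left hm.1

lemma leafComplete [DecidableEq R] (x : ℕ) :
    ∀ (L₁ L₂ : List (Step A R)) (Γ : Set (MSO A)), (∀ χ ∈ Γ, ¬χ.FreeFO x) →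
    CorePEquiv Γ (sumProds x L₁) (sumProds x L₂) →
    CorePDeriv Γ (sumProds x L₁) (sumProds x L₂) := by
  intro L₁
  induction L₁ with
  | nil =>
      intro L₂ Γ hΓ hequiv
      by_cases hs : ∃ m : WVal A, SatAll Γ m
      · obtain ⟨m, hm⟩ := hs
        have h0 := hequiv m hm
        rw [sumProds_sem, sumProds_sem] at h0
        have h1 : L₂.map (wordOf x m) = [] := by
          have := h0.symm
          simpa using this
        have hL₂ : L₂ = [] := List.map_eq_nil_iff.1 h1
        subst hL₂; exact .refl _ _
      · exact corePUnsat (by push_neg at hs; exact hs) _ _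
  | cons Ψ L₁' ih =>
      intro L₂ Γ hΓ hequiv
      refine splitList x (L₂.map (eqPhi x Ψ)) ?_ Γ hΓ ?_ ?_
      · rintro ψ hψ
        obtain ⟨Ψ', _, rfl⟩ := List.mem_map.1 hψ
        exact eqPhi_not_free
      · -- entailment of the big disjunction
        intro m hm
        have h0 := hequiv m hm
        rw [sumProds_sem, sumProds_sem] at h0
        have hmem : wordOf x m Ψ ∈ L₂.map (wordOf x m) := by
          have hmem' : wordOf x m Ψ ∈ (↑(L₂.map (wordOf x m)) : Multiset (List R)) := by
            rw [← h0]; simp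
          simpa using hmem'
        obtain ⟨Ψ', hΨ', heq⟩ := List.mem_map.1 hmem
        rw [sat_bigOr]
        refine ⟨eqPhi x Ψ Ψ', List.mem_map.2 ⟨Ψ', hΨ', rfl⟩, ?_⟩
        rw [sat_eqPhi]
        intro i
        have hfun : (fun i => Ψ'.sem (m.updFO x i)) = fun i => Ψ.sem (m.updFO x i) :=
          List.ofFn_inj.1 heq
        exact (congrFun hfun i).symm
      · -- each branch
        rintro ψ hψ Δ' hsub hΔ'
        obtain ⟨Ψ', hΨ'L₂, rfl⟩ := List.mem_map.1 hψ
        obtain ⟨s, t, rfl⟩ := List.append_of_mem hΨ'L₂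
        have hΓ'' : ∀ χ ∈ insert (eqPhi x Ψ Ψ') Δ', ¬χ.FreeFO x := by
          intro χ hχ
          rcases Set.mem_insert_iff.1 hχ with rfl | hχ
          · exact eqPhi_not_free
          · exact hΔ' χ hχ
        have hstepEq : StepEquiv (insert (eqPhi x Ψ Ψ') Δ') Ψ Ψ' := by
          intro m hm
          have h1 := hm _ (Set.mem_insert _ _)
          rw [sat_eqPhi] at h1
          have h2 := h1 (m.fo x)
          rwa [updFO_self] at h2
        have d1 : CorePDeriv (insert (eqPhi x Ψ Ψ') Δ') (.prod x Ψ) (.prod x Ψ') :=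
          .c4 x hΓ'' (stepComplete _ _ _ hstepEq)
        have hequiv' : CorePEquiv (insert (eqPhi x Ψ Ψ') Δ')
            (sumProds x L₁') (sumProds x (s ++ t)) := by
          intro m hm
          have hmΔ : SatAll Δ' m := fun χ hχ => hm χ (Set.mem_insert_iff.2 (Or.inr hχ))
          have hmΓ : SatAll Γ m := fun χ hχ => hmΔ χ (hsub hχ)
          have heqv := hequiv m hmΓ
          rw [sumProds_sem, sumProds_sem] at heqv
          have hword : wordOf x m Ψ = wordOf x m Ψ' := by
            have h1 := hm _ (Set.mem_insert _ _)
            rw [sat_eqPhi] at h1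
            exact congrArg List.ofFn (funext fun i => h1 i)
          have hperm : (↑((s ++ Ψ' :: t).map (wordOf x m)) : Multiset (List R)) =
              ↑((Ψ' :: (s ++ t)).map (wordOf x m)) :=
            Multiset.coe_eq_coe.2 ((List.perm_middle (a := Ψ') (l₁ := s) (l₂ := t)).map _)
          rw [hperm] at heqv
          rw [List.map_cons, List.map_cons, ← Multiset.cons_coe, ← Multiset.cons_coe, hword] at heqv
          rw [sumProds_sem, sumProds_sem]
          exact (Multiset.cons_inj_right _).1 heqv
        have dRec := ih (s ++ t) _ hΓ'' hequiv'
        exact .trans (.congAdd d1 dRec)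
          (.symm (sumProds_perm _ x (List.perm_middle (a := Ψ') (l₁ := s) (l₂ := t))))

lemma nfComplete [DecidableEq R] (x : ℕ) : ∀ {N₁ : CoreP A R}, NFx x N₁ →
    ∀ {N₂ : CoreP A R}, NFx x N₂ →
    ∀ Γ : Set (MSO A), (∀ χ ∈ Γ, ¬χ.FreeFO x) → CorePEquiv Γ N₁ N₂ →
    CorePDeriv Γ N₁ N₂ := by
  intro N₁ h₁
  induction h₁ with
  | leaf L₁ =>
      intro N₂ h₂
      induction h₂ with
      | leaf L₂ => exact fun Γ hΓ he => leafComplete x L₁ L₂ Γ hΓ he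
      | @ite Na Nb φ hφ ha hb iha ihb =>
          intro Γ hΓ he
          have hΓa : ∀ χ ∈ insert φ Γ, ¬χ.FreeFO x := by
            intro χ hχ
            rcases Set.mem_insert_iff.1 hχ with rfl | hχ
            · exact hφ
            · exact hΓ χ hχ
          have hΓb : ∀ χ ∈ insert (MSO.not φ) Γ, ¬χ.FreeFO x := by
            intro χ hχ
            rcases Set.mem_insert_iff.1 hχ with rfl | hχ
            · exact hφ
            · exact hΓ χ hχ
          refine .symm (.c9 (.symm (iha _ hΓa fun m hm => ?_)) (.symm (ihb _ hΓb fun m hm => ?_)))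
          · rw [satAll_insert] at hm
            rw [he m hm.2, CoreP.sem, if_pos hm.1]
          · rw [satAll_insert] at hm
            rw [he m hm.2, CoreP.sem, if_neg (by simpa [MSO.Sat] using hm.1)]
  | @ite Na Nb φ hφ ha hb iha ihb =>
      intro N₂ h₂ Γ hΓ he
      have hΓa : ∀ χ ∈ insert φ Γ, ¬χ.FreeFO x := by
        intro χ hχ
        rcases Set.mem_insert_iff.1 hχ with rfl | hχ
        · exact hφ
        · exact hΓ χ hχ
      have hΓb : ∀ χ ∈ insert (MSO.not φ) Γ, ¬χ.FreeFO x := by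
        intro χ hχ
        rcases Set.mem_insert_iff.1 hχ with rfl | hχ
        · exact hφ
        · exact hΓ χ hχ
      refine .c9 (iha h₂ _ hΓa fun m hm => ?_) (ihb h₂ _ hΓb fun m hm => ?_)
      · rw [satAll_insert] at hm
        rw [← he m hm.2, CoreP.sem, if_pos hm.1]
      · rw [satAll_insert] at hm
        rw [← he m hm.2, CoreP.sem, if_neg (by simpa [MSO.Sat] using hm.1)]

/-! ### Freshness -/

def msoVars : MSO A → Finset ℕ
  | .top => ∅
  | .pred _ z => {z}
  | .le z u => {z, u}
  | .mem z _ => {z}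
  | .not φ => msoVars φ
  | .and φ ψ => msoVars φ ∪ msoVars ψ
  | .allFO z φ => insert z (msoVars φ)
  | .allSO _ φ => msoVars φ

lemma occ_mem_msoVars {φ : MSO A} {v : ℕ} (h : φ.OccFO v) : v ∈ msoVars φ := by
  induction φ with
  | top => exact absurd h not_false
  | pred a z => simp [msoVars]; exact h.symm
  | le z u => simp [msoVars]; rcases h with h | h; exacts [Or.inl h.symm, Or.inr h.symm]
  | mem z Z => simp [msoVars]; exact h.symm
  | not φ ih => exact ih h
  | and φ ψ ih₁ ih₂ =>
      rcases h with h | h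
      · exact Finset.mem_union_left _ (ih₁ h)
      · exact Finset.mem_union_right _ (ih₂ h)
  | allFO z φ ih =>
      rcases h with h | h
      · simp [msoVars, h]
      · exact Finset.mem_insert_of_mem (ih h)
  | allSO Z φ ih => exact ih h

def stepVars : Step A R → Finset ℕ
  | .const _ => ∅
  | .ite φ a b => msoVars φ ∪ stepVars a ∪ stepVars b

lemma occ_mem_stepVars {Ψ : Step A R} {v : ℕ} (h : Ψ.OccFO v) : v ∈ stepVars Ψ := by
  induction Ψ with
  | const r => exact absurd h not_false
  | ite φ a b iha ihb =>
      rcases h with h | h | h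
      · exact Finset.mem_union_left _ (Finset.mem_union_left _ (occ_mem_msoVars h))
      · exact Finset.mem_union_left _ (Finset.mem_union_right _ (iha h))
      · exact Finset.mem_union_right _ (ihb h)

def corePVars : CoreP A R → Finset ℕ
  | .zero => ∅
  | .prod z Ψ => insert z (stepVars Ψ)
  | .ite φ a b => msoVars φ ∪ corePVars a ∪ corePVars b
  | .add a b => corePVars a ∪ corePVars b

lemma occ_mem_corePVars {Φ : CoreP A R} {v : ℕ} (h : Φ.OccFO v) : v ∈ corePVars Φ := by
  induction Φ with
  | zero => exact absurd h not_false
  | prod z Ψ =>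
      rcases h with h | h
      · simp [corePVars, h]
      · exact Finset.mem_insert_of_mem (occ_mem_stepVars h)
  | ite φ a b iha ihb =>
      rcases h with h | h | h
      · exact Finset.mem_union_left _ (Finset.mem_union_left _ (occ_mem_msoVars h))
      · exact Finset.mem_union_left _ (Finset.mem_union_right _ (iha h))
      · exact Finset.mem_union_right _ (ihb h)
  | add a b iha ihb =>
      rcases h with h | h
      · exact Finset.mem_union_left _ (iha h)
      · exact Finset.mem_union_right _ (ihb h)

end Aux4

/-- **soundness and completeness of core-wMSO(?,+).** For every
finite set `Γ` of MSO formulas and all core-wMSO(?,+) formulas `Φ₁`, `Φ₂`: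
`Φ₁ ∼_Γ Φ₂` iff `Γ ⊢ Φ₁ ≈ Φ₂` is derivable. -/
theorem statement15 {A R : Type} [Fintype A] [DecidableEq R]
    (Γ : Set (MSO A)) (hfin : Γ.Finite) (Φ₁ Φ₂ : CoreP A R) :
    CorePEquiv Γ Φ₁ Φ₂ ↔ CorePDeriv Γ Φ₁ Φ₂ := by
  classical
  constructor
  · intro he
    set F : Finset ℕ := hfin.toFinset.sup msoVars ∪ corePVars Φ₁ ∪ corePVars Φ₂ with hF
    set x := F.sup id + 1 with hxdef
    have hxF : x ∉ F := by
      intro h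
      have : x ≤ F.sup id := Finset.le_sup (f := id) h
      omega
    have hΓ : ∀ χ ∈ Γ, ¬χ.FreeFO x := by
      intro χ hχ hfree
      exact hxF (Finset.mem_union_left _ (Finset.mem_union_left _
        (Finset.mem_sup.2 ⟨χ, hfin.mem_toFinset.2 hχ, occ_mem_msoVars (freeFO_occFO hfree)⟩)))
    have h1 : ¬Φ₁.OccFO x := fun h =>
      hxF (Finset.mem_union_left _ (Finset.mem_union_right _ (occ_mem_corePVars h)))
    have h2 : ¬Φ₂.OccFO x := fun h =>
      hxF (Finset.mem_union_right _ (occ_mem_corePVars h))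
    obtain ⟨N₁, hN₁, d₁⟩ := flatten x Φ₁ h1
    obtain ⟨N₂, hN₂, d₂⟩ := flatten x Φ₂ h2
    have heN : CorePEquiv Γ N₁ N₂ := by
      intro m hm
      rw [← corePSound (d₁ Γ) m hm, ← corePSound (d₂ Γ) m hm]
      exact he m hm
    exact .trans (d₁ Γ) (.trans (nfComplete x hN₁ hN₂ Γ hΓ heN) (.symm (d₂ Γ)))
  · exact corePSound

end WMSO
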